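/- arXiv:1701.05999 — 3 statements merged into one kernel-verified Lean document; each statement's English description precedes it below -/
import Mathlib

section
/- Every path graph (on any number of vertices ≥ 1) admits a closed-neighborhood conflict-free coloring with one color. -/
/-!
The vertices of a fixed residue class mod 3 form a perfect code of the path: every closed
neighborhood is a run of at most three consecutive vertices, so it contains at most one of them,
and the residue can be chosen so that both ends of the path are covered. Coloring exactly the
code vertices is then conflict-free.
-/

open SimpleGraph

/-- The closed neighborhood `N[v]` of a vertex. -/
def closedNbhd {V : Type*} (G : SimpleGraph V) (v : V) : Set V := insert v (G.neighborSet v)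

/-- A closed-neighborhood conflict-free `k`-coloring. -/
def IsCFColoring {V : Type*} (G : SimpleGraph V) (k : ℕ) (c : V → Option (Fin k)) : Prop :=
  ∀ v : V, ∃ w ∈ closedNbhd G v, ∃ col : Fin k, c w = some col ∧
    ∀ u ∈ closedNbhd G v, c u = some col → u = w

def IsPerfectCode {V : Type*} (G : SimpleGraph V) (S : Set V) : Prop :=
  ∀ v : V, ∃! w, w ∈ closedNbhd G v ∧ w ∈ S

theorem IsPerfectCode.isCFColoring {V : Type*} {G : SimpleGraph V} {S : Set V}
    [DecidablePred (· ∈ S)] (hS : IsPerfectCode G S) {k : ℕ} (col : Fin k) :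
    IsCFColoring G k (fun v => if v ∈ S then some col else none) := by
  intro v
  obtain ⟨w, ⟨hwv, hwS⟩, huniq⟩ := hS v
  refine ⟨w, hwv, col, by simp [hwS], fun u hu hcu => huniq u ⟨hu, ?_⟩⟩
  by_contra huS
  simp [huS] at hcu

theorem mem_closedNbhd_pathGraph {n : ℕ} {u v : Fin n} :
    u ∈ closedNbhd (pathGraph n) v ↔ u.val = v.val ∨ u.val + 1 = v.val ∨ v.val + 1 = u.val := by
  simp only [closedNbhd, Set.mem_insert_iff, mem_neighborSet, pathGraph_adj, Fin.ext_iff]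
  omega

/-- The residue is chosen so that the last vertex `n - 1` lies within distance one of a vertex
of that residue; the first vertex always does. -/
def pathCodeResidue (n : ℕ) : ℕ := if n % 3 = 1 then 0 else 1

theorem exists_near_mod_three_eq_pathCodeResidue {n v : ℕ} (hv : v < n) :
    ∃ w < n, (w = v ∨ w + 1 = v ∨ v + 1 = w) ∧ w % 3 = pathCodeResidue n := by
  by_cases hself : v % 3 = pathCodeResidue n
  · exact ⟨v, hv, Or.inl rfl, hself⟩
  by_cases hsucc : (v + 1) % 3 = pathCodeResidue n
  · refine ⟨v + 1, ?_, Or.inr (Or.inr rfl), hsucc⟩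
    unfold pathCodeResidue at hself hsucc
    split_ifs at hself hsucc <;> omega
  · refine ⟨v - 1, by omega, ?_⟩
    unfold pathCodeResidue at hself hsucc ⊢
    split_ifs at hself hsucc ⊢ <;> omega

theorem pathGraph_isPerfectCode_mod_three (n : ℕ) :
    IsPerfectCode (pathGraph n) {w : Fin n | w.val % 3 = pathCodeResidue n} := by
  intro v
  obtain ⟨w, hwn, hwv, hw⟩ := exists_near_mod_three_eq_pathCodeResidue v.isLt
  refine ⟨⟨w, hwn⟩, ⟨mem_closedNbhd_pathGraph.mpr hwv, hw⟩, ?_⟩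
  rintro u ⟨huv, hu⟩
  rw [mem_closedNbhd_pathGraph] at huv
  exact Fin.ext (show u.val = w by simp only [Set.mem_ofPred_eq] at hu; omega)

theorem path_cf_one_colorable_general (n : ℕ) :
    ∃ c : Fin n → Option (Fin 1), IsCFColoring (pathGraph n) 1 c :=
  ⟨_, (pathGraph_isPerfectCode_mod_three n).isCFColoring 0⟩

/-- every path graph on `n ≥ 1` vertices admits a closed-neighborhood
conflict-free coloring with one color. -/
theorem path_cf_one_colorable (n : ℕ) (hn : 1 ≤ n) :
    ∃ c : Fin n → Option (Fin 1), IsCFColoring (pathGraph n) 1 c :=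
  path_cf_one_colorable_general n
end

section
/- Let G be a graph, v a vertex, and suppose the open neighborhood of v contains two vertex-disjoint copies of a graph H with χ_CF(H) = k, such that the vertices of these copies have no edges between the copies and no edges to any vertex of G other than v and vertices within their own copy. Then every closed-neighborhood conflict-free k-coloring of G assigns a color to v. -/
/-
If `v` were uncolored, its unique color `col` would sit on some neighbor `w`, which misses one
of the two disjoint copies of `H`. That copy lies in `N(v)`, so it avoids `col`; and since its
only outside neighbor `v` is uncolored, `c` restricted to it is a conflict-free coloring of `H`.
Dropping the unused color `col` leaves a conflict-free coloring of `H` with `k - 1` colors,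
contradicting `χ_CF(H) = k`.
-/

open SimpleGraph

/-- `G` admits a closed-neighborhood conflict-free coloring with `k` colors. -/
def CFColorable {V : Type*} (G : SimpleGraph V) (k : ℕ) : Prop :=
  ∃ c : V → Option (Fin k), IsCFColoring G k c

/-- The conflict-free chromatic number: the least `k` admitting a conflict-free
`k`-coloring. -/
noncomputable def cfChromaticNumber {V : Type*} (G : SimpleGraph V) : ℕ :=
  sInf {k | CFColorable G k}

/-- An induced copy of `H` inside `G`, contained in the set `A`, all of whose vertices are
adjacent (in `G`) only to vertices of the copy itself or vertices of `attach`. -/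
structure CopyIn {V W : Type*} (G : SimpleGraph V) (H : SimpleGraph W)
    (A : Set V) (attach : Set V) where
  f : W ↪ V
  range_sub : Set.range f ⊆ A
  induced : ∀ a b : W, G.Adj (f a) (f b) ↔ H.Adj a b
  only : ∀ (a : W) (u : V), G.Adj (f a) u → u ∈ attach ∨ u ∈ Set.range f

/-- Two disjoint, independent (no edges in between) copies of `H` inside `G`,
contained in `A` and attached only to `attach`. -/
def TwoCopies {V W : Type*} (G : SimpleGraph V) (H : SimpleGraph W)
    (A : Set V) (attach : Set V) : Prop :=
  ∃ c₁ c₂ : CopyIn G H A attach,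
    Disjoint (Set.range c₁.f) (Set.range c₂.f) ∧
    ∀ a b : W, ¬ G.Adj (c₁.f a) (c₂.f b)

lemma IsCFColoring.of_colors_mem_range {V : Type*} {G : SimpleGraph V} {k m : ℕ}
    {c : V → Option (Fin k)} {c' : V → Option (Fin m)} (φ : Fin m → Fin k)
    (hc : IsCFColoring G k c) (hrange : ∀ a x, c a = some x → x ∈ Set.range φ)
    (hc' : ∀ a y, c' a = some y ↔ c a = some (φ y)) :
    IsCFColoring G m c' := by
  intro a
  obtain ⟨w, hw, col, hcw, huniq⟩ := hc a
  obtain ⟨y, rfl⟩ := hrange w col hcw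
  exact ⟨w, hw, y, (hc' w y).mpr hcw, fun u hu hcu => huniq u hu ((hc' u y).mp hcu)⟩

lemma IsCFColoring.cfColorable_of_forall_ne {V : Type*} {G : SimpleGraph V} {n : ℕ}
    {c : V → Option (Fin (n + 1))} (hc : IsCFColoring G (n + 1) c) (col : Fin (n + 1))
    (hcol : ∀ a, c a ≠ some col) : CFColorable G n := by
  refine ⟨fun a => (c a).bind (finSuccEquiv' col),
    hc.of_colors_mem_range col.succAbove ?_ fun a y => ?_⟩
  · rintro a x hx
    exact Fin.exists_succAbove_eq fun h => hcol a (h ▸ hx)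
  · rw [Option.bind_eq_some_iff]
    constructor
    · rintro ⟨x, hx, hxy⟩
      rwa [← (finSuccEquiv' col).symm_apply_eq.mpr hxy.symm, finSuccEquiv'_symm_some] at hx
    · intro hx
      exact ⟨_, hx, finSuccEquiv'_succAbove col y⟩

namespace CopyIn

variable {V W : Type*} {G : SimpleGraph V} {H : SimpleGraph W} {A attach : Set V}

lemma map_mem_closedNbhd_iff (cp : CopyIn G H A attach) {a b : W} :
    cp.f b ∈ closedNbhd G (cp.f a) ↔ b ∈ closedNbhd H a := by
  simp only [closedNbhd, Set.mem_insert_iff, mem_neighborSet, cp.f.injective.eq_iff,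
    cp.induced]

lemma isCFColoring_comp (cp : CopyIn G H A attach) {k : ℕ} {c : V → Option (Fin k)}
    (hc : IsCFColoring G k c) (hattach : ∀ u ∈ attach, c u = none) :
    IsCFColoring H k (c ∘ cp.f) := by
  intro a
  obtain ⟨w, hw, col, hcw, huniq⟩ := hc (cp.f a)
  obtain ⟨b, rfl⟩ : w ∈ Set.range cp.f := by
    rcases hw with rfl | hadj
    · exact Set.mem_range_self a
    · refine (cp.only a w hadj).resolve_left fun hw => ?_
      simp [hattach w hw] at hcw
  refine ⟨b, cp.map_mem_closedNbhd_iff.mp hw, col, hcw, fun u hu hcu => ?_⟩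
  exact cp.f.injective (huniq _ (cp.map_mem_closedNbhd_iff.mpr hu) hcu)

end CopyIn

lemma TwoCopies.exists_copy_not_mem {V W : Type*} {G : SimpleGraph V} {H : SimpleGraph W}
    {A attach : Set V} (h : TwoCopies G H A attach) (w : V) :
    ∃ cp : CopyIn G H A attach, w ∉ Set.range cp.f := by
  obtain ⟨c₁, c₂, hdisj, -⟩ := h
  by_cases h₁ : w ∈ Set.range c₁.f
  · exact ⟨c₂, fun h₂ => hdisj.ne_of_mem h₁ h₂ rfl⟩
  · exact ⟨c₁, h₁⟩

/-- if the open neighborhood of `v` contains two disjoint independent copies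
of a graph `H` with `χ_CF(H) = k`, attached only to `v`, then every closed-neighborhood
conflict-free `k`-coloring of `G` colors `v`. -/
theorem cf_coloring_forces_vertex_colored {V W : Type*} (G : SimpleGraph V)
    (H : SimpleGraph W) (v : V) (k : ℕ)
    (hH : cfChromaticNumber H = k)
    (hcopies : TwoCopies G H (G.neighborSet v) {v})
    (c : V → Option (Fin k)) (hc : IsCFColoring G k c) :
    c v ≠ none := by
  intro hv
  obtain ⟨w, -, col, -, huniq⟩ := hc v
  obtain ⟨cp, hw⟩ := hcopies.exists_copy_not_mem w
  have hcp : IsCFColoring H k (c ∘ cp.f) :=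
    cp.isCFColoring_comp hc fun u hu => (Set.mem_singleton_iff.mp hu) ▸ hv
  have havoid : ∀ a, (c ∘ cp.f) a ≠ some col := fun a ha =>
    hw ⟨a, huniq _ (Set.mem_insert_of_mem _ (cp.range_sub (Set.mem_range_self a))) ha⟩
  obtain ⟨n, rfl⟩ : ∃ n, k = n + 1 := Nat.exists_eq_add_one.mpr col.pos
  have : cfChromaticNumber H ≤ n := Nat.sInf_le (hcp.cfColorable_of_forall_ne col havoid)
  omega
end

section
/- (Conflict-free Hadwiger) Every graph that does not contain K_{k+1} as a minor admits a closed-neighborhood conflict-free k-coloring; i.e., χ_CF(G) ≤ k whenever G is K_{k+1}-minor-free. -/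
/-!
Induct on `k`. Choose a set `S` of vertices with pairwise disjoint closed neighbourhoods such that
every vertex outside `N[S]` has a neighbour in `N[S]`, and `N[S]` induces a connected subgraph
inside each component of `G`. A largest set with the first and last properties has the middle one:
a vertex at distance `≥ 3` from `S` can be slid along a path to distance exactly `3` and added.
Give `S` a new colour and leave `N[S] \ S` uncoloured, so each vertex of `N[S]` sees the new colour
exactly once. Adding the relevant piece of `N[S]` as a branch set turns a `K_k` minor of `G - N[S]`
into a `K_{k+1}` minor of `G`; so `G - N[S]` has a conflict-free colouring with the other `k - 1`
colours, and it stays conflict-free in `G` since its vertices gain only uncoloured neighbours.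
-/

open SimpleGraph

/-- `HasMinor G H` : `H` is a minor of `G`. -/
def HasMinor {V W : Type*} (G : SimpleGraph V) (H : SimpleGraph W) : Prop :=
  ∃ f : W → Set V,
    (∀ w, (f w).Nonempty) ∧
    (∀ w, (G.induce (f w)).Connected) ∧
    (Pairwise fun w w' => Disjoint (f w) (f w')) ∧
    ∀ ⦃w w'⦄, H.Adj w w' → ∃ a ∈ f w, ∃ b ∈ f w', G.Adj a b

namespace SimpleGraph

variable {V : Type*} {G : SimpleGraph V}

lemma mem_closedNbhd {u v : V} : u ∈ closedNbhd G v ↔ u = v ∨ G.Adj v u := Iff.rfl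

lemma self_mem_closedNbhd (v : V) : v ∈ closedNbhd G v := Set.mem_insert v _

lemma mem_closedNbhd_comm {u v : V} : u ∈ closedNbhd G v ↔ v ∈ closedNbhd G u := by
  simp only [mem_closedNbhd, eq_comm, adj_comm]

lemma mem_closedNbhd_induce {A : Set V} {u v : A} :
    u ∈ closedNbhd (G.induce A) v ↔ u.1 ∈ closedNbhd G v.1 := by
  simp only [mem_closedNbhd, Subtype.ext_iff, comap_adj, Function.Embedding.subtype_apply]

lemma Reachable.of_mem_closedNbhd {u v : V} (h : u ∈ closedNbhd G v) : G.Reachable v u := by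
  rcases mem_closedNbhd.mp h with rfl | hvu
  · rfl
  · exact hvu.reachable

lemma connected_induce_closedNbhd (v : V) : (G.induce (closedNbhd G v)).Connected := by
  refine connected_iff_exists_forall_reachable _ |>.mpr ⟨⟨v, self_mem_closedNbhd v⟩, ?_⟩
  rintro ⟨w, hw⟩
  rcases mem_closedNbhd.mp hw with rfl | hvw
  · rfl
  · exact Adj.reachable (G := G.induce _) hvw

lemma Connected.induce_image_val {A : Set V} {s : Set A} (h : ((G.induce A).induce s).Connected) :
    (G.induce (Subtype.val '' s)).Connected := by
  refine h.map ⟨fun x => ⟨x.1.1, Set.mem_image_of_mem _ x.2⟩, fun hxy => hxy⟩ ?_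
  rintro ⟨_, x, hx, rfl⟩
  exact ⟨⟨x, hx⟩, rfl⟩

lemma Reachable.of_induce {A : Set V} {a b : A} (h : (G.induce A).Reachable a b) :
    G.Reachable a b :=
  h.map (Embedding.induce A).toHom

section Minor

variable {W : Type*} {H : SimpleGraph W}

structure IsMinorModel (G : SimpleGraph V) (H : SimpleGraph W) (f : W → Set V) : Prop where
  nonempty : ∀ w, (f w).Nonempty
  connected : ∀ w, (G.induce (f w)).Connected
  pairwiseDisjoint : Pairwise fun w w' => Disjoint (f w) (f w')
  exists_adj : ∀ ⦃w w'⦄, H.Adj w w' → ∃ a ∈ f w, ∃ b ∈ f w', G.Adj a b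

lemma hasMinor_iff : HasMinor G H ↔ ∃ f, IsMinorModel G H f :=
  ⟨fun ⟨f, h₁, h₂, h₃, h₄⟩ => ⟨f, h₁, h₂, h₃, h₄⟩, fun ⟨f, h₁, h₂, h₃, h₄⟩ => ⟨f, h₁, h₂, h₃, h₄⟩⟩

lemma IsMinorModel.image_val {A : Set V} {f : W → Set A} (hf : IsMinorModel (G.induce A) H f) :
    IsMinorModel G H fun w => Subtype.val '' f w where
  nonempty w := (hf.nonempty w).image _
  connected w := (hf.connected w).induce_image_val
  pairwiseDisjoint _ _ h :=
    (Set.disjoint_image_iff Subtype.val_injective).mpr (hf.pairwiseDisjoint h)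
  exists_adj _ _ h := by
    obtain ⟨a, ha, b, hb, hab⟩ := hf.exists_adj h
    exact ⟨a, Set.mem_image_of_mem _ ha, b, Set.mem_image_of_mem _ hb, hab⟩

lemma IsMinorModel.reachable {f : W → Set V} (hf : IsMinorModel G H f) {w w' : W}
    (hww' : H.Reachable w w') {a b : V} (ha : a ∈ f w) (hb : b ∈ f w') : G.Reachable a b := by
  obtain ⟨p⟩ := hww'
  induction p generalizing a with
  | nil => exact ((hf.connected _).preconnected ⟨a, ha⟩ ⟨b, hb⟩).of_induce
  | cons h _ ih =>
    obtain ⟨a', ha', b', hb', hab'⟩ := hf.exists_adj h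
    exact (((hf.connected _).preconnected ⟨a, ha⟩ ⟨a', ha'⟩).of_induce.trans hab'.reachable).trans
      (ih hb' hb)

lemma IsMinorModel.cons {n : ℕ} {f : Fin n → Set V} (hf : IsMinorModel G ⊤ f) {X : Set V}
    (hne : X.Nonempty) (hconn : (G.induce X).Connected) (hdisj : ∀ i, Disjoint X (f i))
    (hadj : ∀ i, ∃ a ∈ X, ∃ b ∈ f i, G.Adj a b) :
    IsMinorModel G ⊤ (Fin.cons X f : Fin (n + 1) → Set V) where
  nonempty i := by
    cases i using Fin.cases with
    | zero => exact hne
    | succ i => exact hf.nonempty i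
  connected i := by
    cases i using Fin.cases with
    | zero => exact hconn
    | succ i => exact hf.connected i
  pairwiseDisjoint i j hij := by
    cases i using Fin.cases <;> cases j using Fin.cases
    · exact absurd rfl hij
    · exact hdisj _
    · exact (hdisj _).symm
    · exact hf.pairwiseDisjoint fun h => hij (congrArg Fin.succ h)
  exists_adj i j hij := by
    cases i using Fin.cases <;> cases j using Fin.cases
    · exact absurd rfl hij
    · exact hadj _
    · obtain ⟨a, ha, b, hb, hab⟩ := hadj _
      exact ⟨b, hb, a, ha, hab.symm⟩
    · exact hf.exists_adj fun h => (top_adj _ _).mp hij (congrArg Fin.succ h)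

lemma hasMinor_top_one [Nonempty V] (G : SimpleGraph V) : HasMinor G (⊤ : SimpleGraph (Fin 1)) := by
  obtain ⟨v⟩ := ‹Nonempty V›
  refine hasMinor_iff.mpr ⟨fun _ => {v}, ⟨fun _ => ⟨v, rfl⟩, fun _ => ?_, Subsingleton.pairwise,
    fun i j hij => absurd (Subsingleton.elim i j) ((top_adj i j).mp hij)⟩⟩
  exact connected_iff _ |>.mpr ⟨Preconnected.of_subsingleton, ⟨⟨v, rfl⟩⟩⟩

end Minor

section ComponentwiseConnected

def IsComponentwiseConnected (G : SimpleGraph V) (D : Set V) : Prop :=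
  ∀ ⦃x⦄ (hx : x ∈ D) ⦃y⦄ (hy : y ∈ D), G.Reachable x y → (G.induce D).Reachable ⟨x, hx⟩ ⟨y, hy⟩

lemma IsComponentwiseConnected.union {B D : Set V} (hD : IsComponentwiseConnected G D)
    (hB : (G.induce B).Connected)
    (hjoin : ∀ b ∈ B, ∀ d ∈ D, G.Reachable b d → ∃ b' ∈ B, ∃ d' ∈ D, d' ∈ closedNbhd G b') :
    IsComponentwiseConnected G (B ∪ D) := by
  have within_B {a b : V} (ha : a ∈ B) (hb : b ∈ B) :
      (G.induce (B ∪ D)).Reachable ⟨a, .inl ha⟩ ⟨b, .inl hb⟩ :=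
    (hB.preconnected ⟨a, ha⟩ ⟨b, hb⟩).map (G.induceHomOfLE Set.subset_union_left).toHom
  have within_D {a b : V} (ha : a ∈ D) (hb : b ∈ D) (hab : G.Reachable a b) :
      (G.induce (B ∪ D)).Reachable ⟨a, .inr ha⟩ ⟨b, .inr hb⟩ :=
    (hD ha hb hab).map (G.induceHomOfLE Set.subset_union_right).toHom
  have across {b d : V} (hb : b ∈ B) (hd : d ∈ D) (hbd : G.Reachable b d) :
      (G.induce (B ∪ D)).Reachable ⟨b, .inl hb⟩ ⟨d, .inr hd⟩ := by
    obtain ⟨b', hb', d', hd', hd'b'⟩ := hjoin b hb d hd hbd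
    have step : (G.induce (B ∪ D)).Reachable ⟨b', .inl hb'⟩ ⟨d', .inr hd'⟩ := by
      rcases mem_closedNbhd.mp hd'b' with rfl | h
      · rfl
      · exact Adj.reachable (G := G.induce _) h
    have hbb' := within_B hb hb'
    exact hbb'.trans (step.trans (within_D hd' hd ((hbb'.trans step).of_induce.symm.trans hbd)))
  rintro x (hx | hx) y (hy | hy) hxy
  · exact within_B hx hy
  · exact across hx hy hxy
  · exact (across hy hx hxy.symm).symm
  · exact within_D hx hy hxy

/-- The new branch set is the component of `G[D]` containing the neighbours of the old ones. -/
lemma hasMinor_top_succ_of_induce_compl {D : Set V} {n : ℕ} (hD : IsComponentwiseConnected G D)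
    (hdom : ∀ v ∉ D, ∃ d ∈ D, G.Adj v d)
    (h : HasMinor (G.induce Dᶜ) (⊤ : SimpleGraph (Fin (n + 1)))) :
    HasMinor G (⊤ : SimpleGraph (Fin (n + 2))) := by
  obtain ⟨f, hf⟩ := hasMinor_iff.mp h
  have hg := hf.image_val
  choose v hv using hg.nonempty
  have hvD i : v i ∉ D := by
    obtain ⟨w, -, hw⟩ := hv i
    exact hw ▸ w.2
  choose x hxD hvx using fun i => hdom (v i) (hvD i)
  let C := (G.induce D).connectedComponentMk ⟨x 0, hxD 0⟩
  have hxC i : x i ∈ Subtype.val '' C.supp := by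
    refine ⟨⟨x i, hxD i⟩, ?_, rfl⟩
    refine ConnectedComponent.mem_supp_iff _ _ |>.mpr (ConnectedComponent.eq.mpr (hD _ _ ?_))
    have hv0i : G.Reachable (v i) (v 0) := hg.reachable (preconnected_top _ _) (hv i) (hv 0)
    exact (hvx i).symm.reachable.trans (hv0i.trans (hvx 0).reachable)
  refine hasMinor_iff.mpr ⟨_, hg.cons ⟨x 0, hxC 0⟩
    (ConnectedComponent.maximal_connected_induce_supp C).prop.induce_image_val
    (fun i => Set.disjoint_of_subset (Subtype.coe_image_subset _ _) (Subtype.coe_image_subset _ _)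
      disjoint_compl_right)
    (fun i => ⟨x i, hxC i, v i, hv i, (hvx i).symm⟩)⟩

end ComponentwiseConnected

section ScatteredSet

def closedNbhdSet (G : SimpleGraph V) (S : Set V) : Set V := ⋃ s ∈ S, closedNbhd G s

variable {S : Set V}

lemma mem_closedNbhdSet {v : V} : v ∈ closedNbhdSet G S ↔ ∃ s ∈ S, v ∈ closedNbhd G s := by
  simp only [closedNbhdSet, Set.mem_iUnion, exists_prop]

lemma closedNbhd_subset_closedNbhdSet {s : V} (hs : s ∈ S) :
    closedNbhd G s ⊆ closedNbhdSet G S :=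
  Set.subset_biUnion_of_mem hs

lemma subset_closedNbhdSet : S ⊆ closedNbhdSet G S :=
  fun s hs => closedNbhd_subset_closedNbhdSet hs (self_mem_closedNbhd s)

lemma closedNbhdSet_insert (u : V) :
    closedNbhdSet G (insert u S) = closedNbhd G u ∪ closedNbhdSet G S :=
  Set.biUnion_insert u S _

lemma notMem_of_disjoint_closedNbhdSet {u : V}
    (hu : Disjoint (closedNbhd G u) (closedNbhdSet G S)) : u ∉ S :=
  fun huS => Set.disjoint_left.mp hu (self_mem_closedNbhd u) (subset_closedNbhdSet huS)

/-- Either the component of `v` avoids `S`, or sliding `v` along a path towards `S` reaches a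
vertex at distance exactly `3` from `S`. -/
lemma exists_far_joinable {v : V} (hv : Disjoint (closedNbhd G v) (closedNbhdSet G S)) :
    ∃ u, Disjoint (closedNbhd G u) (closedNbhdSet G S) ∧
      ∀ b ∈ closedNbhd G u, ∀ d ∈ closedNbhdSet G S, G.Reachable b d →
        ∃ b' ∈ closedNbhd G u, ∃ d' ∈ closedNbhdSet G S, d' ∈ closedNbhd G b' := by
  by_cases hreach : ∃ s ∈ S, G.Reachable v s
  · obtain ⟨s, hs, ⟨p⟩⟩ := hreach
    have hs' : s ∉ {w | Disjoint (closedNbhd G w) (closedNbhdSet G S)} :=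
      fun hs' => notMem_of_disjoint_closedNbhdSet hs' hs
    obtain ⟨⟨⟨u, u'⟩, huu'⟩, -, hu, hu'⟩ := p.exists_boundary_dart _ hv hs'
    obtain ⟨d', hd'u', hd'⟩ := Set.not_disjoint_iff.mp hu'
    exact ⟨u, hu, fun _ _ _ _ _ => ⟨u', Or.inr huu', d', hd', hd'u'⟩⟩
  · refine ⟨v, hv, fun b hb d hd hbd => absurd ?_ hreach⟩
    obtain ⟨s, hs, hds⟩ := mem_closedNbhdSet.mp hd
    exact ⟨s, hs, (Reachable.of_mem_closedNbhd hb).trans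
      (hbd.trans (Reachable.of_mem_closedNbhd hds).symm)⟩

lemma exists_scattered_dominating [Fintype V] (G : SimpleGraph V) :
    ∃ S : Finset V, (S : Set V).PairwiseDisjoint (closedNbhd G) ∧
      IsComponentwiseConnected G (closedNbhdSet G S) ∧
      ∀ v ∉ closedNbhdSet G S, ∃ d ∈ closedNbhdSet G S, G.Adj v d := by
  classical
  let good (S : Finset V) : Prop :=
    (S : Set V).PairwiseDisjoint (closedNbhd G) ∧ IsComponentwiseConnected G (closedNbhdSet G S)
  have empty_good : good ∅ := ⟨by simp, by simp [IsComponentwiseConnected, closedNbhdSet]⟩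
  obtain ⟨S, hS, hmax⟩ := (Finset.univ.filter good).exists_max_image Finset.card
    ⟨∅, Finset.mem_filter.mpr ⟨Finset.mem_univ _, empty_good⟩⟩
  obtain ⟨hdisj, hconn⟩ := (Finset.mem_filter.mp hS).2
  have hnear v : ¬ Disjoint (closedNbhd G v) (closedNbhdSet G S) := by
    intro hfar
    obtain ⟨u, hu, hjoin⟩ := exists_far_joinable hfar
    have huS : u ∉ S := notMem_of_disjoint_closedNbhdSet hu
    have hgood : good (insert u S) := by
      refine ⟨?_, ?_⟩
      · rw [Finset.coe_insert]
        exact hdisj.insert fun s hs _ => hu.mono_right (closedNbhd_subset_closedNbhdSet hs)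
      · rw [Finset.coe_insert, closedNbhdSet_insert]
        exact hconn.union (connected_induce_closedNbhd u) hjoin
    have := hmax _ (Finset.mem_filter.mpr ⟨Finset.mem_univ _, hgood⟩)
    rw [Finset.card_insert_of_notMem huS] at this
    omega
  refine ⟨S, hdisj, hconn, fun v hv => ?_⟩
  obtain ⟨d, hdv, hd⟩ := Set.not_disjoint_iff.mp (hnear v)
  rcases mem_closedNbhd.mp hdv with rfl | h
  · exact absurd hd hv
  · exact ⟨d, hd, h⟩

end ScatteredSet

section Coloring

variable {k : ℕ} {S D : Set V}

open Classical in
noncomputable def extendColoring (S D : Set V) (c : (Dᶜ : Set V) → Option (Fin k)) :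
    V → Option (Fin (k + 1)) :=
  fun v => if v ∈ S then some (Fin.last k) else
    if h : v ∈ Dᶜ then (c ⟨v, h⟩).map Fin.castSucc else none

lemma extendColoring_eq_some_last {c : (Dᶜ : Set V) → Option (Fin k)} {u : V} :
    extendColoring S D c u = some (Fin.last k) ↔ u ∈ S := by
  unfold extendColoring
  split_ifs <;> simp [*, Fin.castSucc_ne_last]

lemma extendColoring_eq_some_castSucc (hSD : S ⊆ D) {c : (Dᶜ : Set V) → Option (Fin k)} {u : V}
    {j : Fin k} :
    extendColoring S D c u = some j.castSucc ↔ ∃ h : u ∈ Dᶜ, c ⟨u, h⟩ = some j := by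
  unfold extendColoring
  split_ifs with huS huD
  · simp [(Fin.castSucc_ne_last j).symm, hSD huS]
  · simp [huD]
  · simp [huD]

lemma IsCFColoring.extendColoring (hS : S.PairwiseDisjoint (closedNbhd G))
    {c : ((closedNbhdSet G S)ᶜ : Set V) → Option (Fin k)}
    (hc : IsCFColoring (G.induce (closedNbhdSet G S)ᶜ) k c) :
    IsCFColoring G (k + 1) (extendColoring S (closedNbhdSet G S) c) := by
  intro v
  by_cases hv : v ∈ closedNbhdSet G S
  · obtain ⟨s, hs, hvs⟩ := mem_closedNbhdSet.mp hv
    refine ⟨s, mem_closedNbhd_comm.mp hvs, Fin.last k, extendColoring_eq_some_last.mpr hs,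
      fun u hu hcu => ?_⟩
    exact hS.elim_set (extendColoring_eq_some_last.mp hcu) hs v (mem_closedNbhd_comm.mp hu) hvs
  · obtain ⟨w, hw, j, hcw, huniq⟩ := hc ⟨v, hv⟩
    have hSD : S ⊆ closedNbhdSet G S := subset_closedNbhdSet
    refine ⟨w, mem_closedNbhd_induce.mp hw, j.castSucc,
      (extendColoring_eq_some_castSucc hSD).mpr ⟨w.2, hcw⟩, fun u hu hcu => ?_⟩
    obtain ⟨hu', hcu'⟩ := (extendColoring_eq_some_castSucc hSD).mp hcu
    exact congrArg Subtype.val (huniq ⟨u, hu'⟩ (mem_closedNbhd_induce.mpr hu) hcu')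

end Coloring

end SimpleGraph

/-- Conflict-free Hadwiger: every graph with no `K_{k+1}` minor admits
a closed-neighborhood conflict-free `k`-coloring, i.e. `χ_CF(G) ≤ k`. -/
theorem cf_hadwiger {V : Type*} [Fintype V] (G : SimpleGraph V) (k : ℕ)
    (h : ¬ HasMinor G (⊤ : SimpleGraph (Fin (k + 1)))) :
    ∃ c : V → Option (Fin k), IsCFColoring G k c := by
  induction k generalizing V with
  | zero =>
    have : IsEmpty V := not_nonempty_iff.mp fun _ => h (hasMinor_top_one G)
    exact ⟨fun _ => none, isEmptyElim⟩
  | succ k ih =>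
    classical
    obtain ⟨S, hdisj, hconn, hdom⟩ := exists_scattered_dominating G
    obtain ⟨c, hc⟩ := ih (G.induce (closedNbhdSet G S)ᶜ)
      fun hminor => h (hasMinor_top_succ_of_induce_compl hconn hdom hminor)
    exact ⟨_, hc.extendColoring hdisj⟩
end
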